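/- For every s, t > 0, Γ(1+s)^t/Γ(1+st) = exp(∫_{-∞}^0 (e^{sx} - 1 - sx)·(t/(e^{|x|}-1) - 1/(e^{|x|/t}-1)) dx/|x|), with the integral converging absolutely. -/

import Mathlib

/-!
Substituting `x = -u`, the integrand becomes `t * m s u - t⁻¹ * m (s * t) (u / t)`, where
`m s u = (exp (-s * u) - 1 + s * u) / (u * (exp u - 1))`. Malmstén's formula
`∫₀^∞ m s = γ s + log Γ(1 + s)` then gives the claim, the `γ`-terms cancelling.

Malmstén's formula itself comes from expanding `1 / (exp u - 1) = ∑ exp (-(n + 1) u)`. Writing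
`(exp (-s * u) - 1 + s * u) / u = ∫₀^s (1 - exp (-v * u)) dv`, Fubini evaluates the `n`-th term
to `s / (n + 1) - log (1 + s / (n + 1))`, and these sum to `γ s + log Γ(1 + s)` by the Weierstrass
product for `Γ`.
-/

open MeasureTheory Set Filter Real

lemma integrable_of_hasSum_of_summable_integral_norm {α E : Type*} [MeasurableSpace α]
    {μ : Measure α} [NormedAddCommGroup E] {F : ℕ → α → E} {f : α → E}
    (hF_int : ∀ n, Integrable (F n) μ) (hF_sum : Summable fun n ↦ ∫ a, ‖F n a‖ ∂μ)
    (hf : ∀ᵐ a ∂μ, HasSum (F · a) (f a)) : Integrable f μ := by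
  refine ⟨aestronglyMeasurable_of_tendsto_ae atTop
    (fun N => (integrable_finsetSum (Finset.range N) fun n _ => hF_int n).aestronglyMeasurable)
    (hf.mono fun a ha => ha.tendsto_sum_nat), ?_⟩
  calc ∫⁻ a, ‖f a‖ₑ ∂μ ≤ ∫⁻ a, ∑' n, ‖F n a‖ₑ ∂μ :=
        lintegral_mono_ae (hf.mono fun a ha => ha.tsum_eq ▸ enorm_tsum_le_tsum_enorm)
    _ = ∑' n, ENNReal.ofReal (∫ a, ‖F n a‖ ∂μ) := by
        rw [lintegral_tsum fun n => (hF_int n).aestronglyMeasurable.enorm]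
        simp_rw [ofReal_integral_norm_eq_lintegral_enorm (hF_int _)]
    _ < ⊤ := by
        rw [← ENNReal.ofReal_tsum_of_nonneg (fun n => integral_nonneg fun a => norm_nonneg _)
          hF_sum]
        exact ENNReal.ofReal_lt_top

lemma integrableOn_Iio_iff_comp_neg {E : Type*} [NormedAddCommGroup E] {f : ℝ → E} {c : ℝ} :
    IntegrableOn f (Iio c) ↔ IntegrableOn (fun x => f (-x)) (Ioi (-c)) := by
  conv_lhs => rw [← Measure.map_neg_eq_self (volume : Measure ℝ)]
  rw [measurableEmbedding_neg.integrableOn_map_iff]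
  simp [Function.comp_def]

lemma hasSum_exp_neg_succ_mul {u : ℝ} (hu : 0 < u) :
    HasSum (fun n : ℕ => exp (-(n + 1) * u)) (1 / (exp u - 1)) := by
  have hterm : (fun n : ℕ => exp (-(n + 1) * u)) = fun n => exp (-u) * exp (-u) ^ n := by
    ext n
    rw [← exp_nat_mul, ← exp_add]; ring_nf
  have hsum : 1 / (exp u - 1) = exp (-u) * (1 - exp (-u))⁻¹ := by
    have : exp u - 1 ≠ 0 := by linarith [add_one_lt_exp hu.ne']
    rw [exp_neg]
    field_simp
  rw [hterm, hsum]
  exact (hasSum_geometric_of_lt_one (exp_pos _).le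
    (exp_lt_one_iff.2 (neg_lt_zero.2 hu))).mul_left _

lemma sum_range_log_one_add_div_eq_logGammaSeq {z : ℝ} (hz : 0 < z) (N : ℕ) :
    ∑ n ∈ Finset.range N, log (1 + z / (n + 1)) =
      z * log N - BohrMollerup.logGammaSeq z N - log z := by
  induction N with
  | zero => simp [BohrMollerup.logGammaSeq]
  | succ N ih =>
    rw [Finset.sum_range_succ, ih]
    simp only [BohrMollerup.logGammaSeq, Finset.sum_range_succ (n := N + 1), Nat.factorial_succ]
    have h1 : (0:ℝ) < N + 1 := by positivity
    push_cast
    rw [log_mul h1.ne' (by positivity),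
      show (1 : ℝ) + z / (N + 1) = (z + (N + 1)) / (N + 1) by field_simp; ring,
      log_div (by positivity) h1.ne']
    ring

theorem hasSum_div_sub_log_one_add_div {z : ℝ} (hz : 0 < z) :
    HasSum (fun n : ℕ => z / (n + 1) - log (1 + z / (n + 1)))
      (eulerMascheroniConstant * z + log (Gamma (1 + z))) := by
  have hnonneg (n : ℕ) : 0 ≤ z / (n + 1) - log (1 + z / (n + 1)) := by
    linarith [log_le_sub_one_of_pos (show 0 < 1 + z / (n + 1) by positivity)]
  rw [hasSum_iff_tendsto_nat_of_nonneg hnonneg]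
  have hpartial (N : ℕ) : ∑ n ∈ Finset.range N, (z / (n + 1) - log (1 + z / (n + 1))) =
      z * (harmonic N - log N) + BohrMollerup.logGammaSeq z N + log z := by
    rw [Finset.sum_sub_distrib, sum_range_log_one_add_div_eq_logGammaSeq hz, harmonic]
    push_cast
    simp only [mul_sub, Finset.mul_sum, div_eq_mul_inv]
    ring
  simp only [hpartial]
  rw [add_comm 1 z, Gamma_add_one hz.ne', log_mul hz.ne' (Gamma_pos_of_pos hz).ne', mul_comm _ z,
    add_comm (log z), ← add_assoc]
  exact ((tendsto_harmonic_sub_log.const_mul z).add (BohrMollerup.tendsto_log_gamma hz)).add_const _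

noncomputable def malmstenKernel (s u : ℝ) : ℝ := (exp (-s * u) - 1 + s * u) / u

lemma malmstenKernel_nonneg (s : ℝ) {u : ℝ} (hu : 0 < u) : 0 ≤ malmstenKernel s u :=
  div_nonneg (by linarith [add_one_le_exp (-s * u)]) hu.le

lemma malmstenKernel_le {s u : ℝ} (hs : 0 ≤ s) (hu : 0 < u) : malmstenKernel s u ≤ s := by
  rw [malmstenKernel, div_le_iff₀ hu]
  linarith [exp_le_one_iff.2 (by nlinarith : -s * u ≤ 0)]

lemma integrableOn_malmstenKernel_mul_exp {s a : ℝ} (hs : 0 ≤ s) (ha : 0 < a) :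
    IntegrableOn (fun u => malmstenKernel s u * exp (-a * u)) (Ioi 0) := by
  refine ((exp_neg_integrableOn_Ioi 0 ha).const_mul s).mono'
    (Measurable.aestronglyMeasurable (by unfold malmstenKernel; fun_prop)) ?_
  filter_upwards [ae_restrict_mem measurableSet_Ioi] with u hu
  rw [norm_of_nonneg (mul_nonneg (malmstenKernel_nonneg s hu) (exp_pos _).le)]
  exact mul_le_mul_of_nonneg_right (malmstenKernel_le hs hu) (exp_pos _).le

lemma malmstenKernel_eq_integral {s u : ℝ} (hs : 0 ≤ s) (hu : u ≠ 0) :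
    malmstenKernel s u = ∫ v in Ioc 0 s, (1 - exp (-v * u)) := by
  have hexp : ∫ v in 0..s, exp (-v * u) = (1 - exp (-s * u)) / u := by
    simpa [div_eq_inv_mul] using
      intervalIntegral.integral_comp_mul_right (fun x => exp (-x)) hu (a := 0) (b := s)
  rw [← intervalIntegral.integral_of_le hs, intervalIntegral.integral_sub intervalIntegrable_const
    ((by fun_prop : Continuous fun v => exp (-v * u)).intervalIntegrable _ _), hexp,
    intervalIntegral.integral_const, malmstenKernel]
  field_simp
  ring

lemma integral_exp_neg_mul_Ioi_zero {a : ℝ} (ha : 0 < a) :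
    ∫ u in Ioi 0, exp (-a * u) = 1 / a := by
  simpa [neg_div_neg_eq] using integral_exp_mul_Ioi (neg_neg_iff_pos.2 ha) 0

lemma integral_one_sub_exp_mul_exp_Ioi {a v : ℝ} (ha : 0 < a) (hav : 0 < a + v) :
    ∫ u in Ioi 0, (1 - exp (-v * u)) * exp (-a * u) = 1 / a - 1 / (a + v) := by
  have hsplit (u : ℝ) :
      (1 - exp (-v * u)) * exp (-a * u) = exp (-a * u) - exp (-(a + v) * u) := by
    rw [sub_mul, one_mul, ← exp_add]; ring_nf
  simp_rw [hsplit]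
  rw [integral_sub (exp_neg_integrableOn_Ioi 0 ha) (exp_neg_integrableOn_Ioi 0 hav),
    integral_exp_neg_mul_Ioi_zero ha, integral_exp_neg_mul_Ioi_zero hav]

lemma integral_one_div_sub_one_div_add_Ioc {a s : ℝ} (ha : 0 < a) (hs : 0 ≤ s) :
    ∫ v in Ioc 0 s, (1 / a - 1 / (a + v)) = s / a - log (1 + s / a) := by
  rw [← intervalIntegral.integral_of_le hs,
    intervalIntegral.integral_sub intervalIntegrable_const, intervalIntegral.integral_comp_add_left (fun v => 1 / v),
    integral_one_div_of_pos (by linarith) (by linarith)]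
  · simp only [one_div, intervalIntegral.integral_const, sub_zero, smul_eq_mul, add_zero]
    field_simp
  · refine ContinuousOn.intervalIntegrable (continuousOn_const.div (by fun_prop) fun v hv => ?_)
    rw [uIcc_of_le hs] at hv
    linarith [hv.1]

lemma integral_malmstenKernel_mul_exp {s a : ℝ} (hs : 0 ≤ s) (ha : 0 < a) :
    ∫ u in Ioi 0, malmstenKernel s u * exp (-a * u) = s / a - log (1 + s / a) := by
  have hint : Integrable (Function.uncurry fun u v => (1 - exp (-v * u)) * exp (-a * u))
      ((volume.restrict (Ioi 0)).prod (volume.restrict (Ioc 0 s))) := by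
    refine ((exp_neg_integrableOn_Ioi 0 ha).comp_fst _).mono'
      (Continuous.aestronglyMeasurable (by fun_prop)) ?_
    rw [Measure.prod_restrict]
    filter_upwards [ae_restrict_mem (measurableSet_Ioi.prod measurableSet_Ioc)] with p hp
    have hexp : exp (-p.2 * p.1) ≤ 1 := exp_le_one_iff.2 (by nlinarith [hp.1.out, hp.2.1])
    rw [Function.uncurry_apply_pair, norm_of_nonneg (mul_nonneg (by linarith) (exp_pos _).le)]
    exact mul_le_of_le_one_left (exp_pos _).le (by linarith [exp_pos (-p.2 * p.1)])
  calc ∫ u in Ioi 0, malmstenKernel s u * exp (-a * u)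
      = ∫ u in Ioi 0, ∫ v in Ioc 0 s, (1 - exp (-v * u)) * exp (-a * u) := by
        refine setIntegral_congr_fun measurableSet_Ioi fun u hu => ?_
        rw [malmstenKernel_eq_integral hs (ne_of_gt hu), integral_mul_const]
    _ = ∫ v in Ioc 0 s, ∫ u in Ioi 0, (1 - exp (-v * u)) * exp (-a * u) :=
        integral_integral_swap hint
    _ = ∫ v in Ioc 0 s, (1 / a - 1 / (a + v)) :=
        setIntegral_congr_fun measurableSet_Ioc fun v hv =>
          integral_one_sub_exp_mul_exp_Ioi ha (by linarith [hv.1])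
    _ = s / a - log (1 + s / a) := integral_one_div_sub_one_div_add_Ioc ha hs

theorem malmsten_formula {s : ℝ} (hs : 0 < s) :
    IntegrableOn (fun u => malmstenKernel s u / (exp u - 1)) (Ioi 0) ∧
      ∫ u in Ioi 0, malmstenKernel s u / (exp u - 1) =
        eulerMascheroniConstant * s + log (Gamma (1 + s)) := by
  set f : ℕ → ℝ → ℝ := fun n u => malmstenKernel s u * exp (-(n + 1) * u)
  have hf_int (n : ℕ) : IntegrableOn (f n) (Ioi 0) :=
    integrableOn_malmstenKernel_mul_exp hs.le (by positivity)
  have hf_integral (n : ℕ) : ∫ u in Ioi 0, f n u = s / (n + 1) - log (1 + s / (n + 1)) :=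
    integral_malmstenKernel_mul_exp hs.le (by positivity)
  have hf_integral_norm (n : ℕ) : ∫ u in Ioi 0, ‖f n u‖ = ∫ u in Ioi 0, f n u :=
    setIntegral_congr_fun measurableSet_Ioi fun u hu =>
      norm_of_nonneg (mul_nonneg (malmstenKernel_nonneg s hu) (exp_pos _).le)
  have hf_sum : ∀ᵐ u ∂volume.restrict (Ioi 0),
      HasSum (f · u) (malmstenKernel s u / (exp u - 1)) := by
    filter_upwards [ae_restrict_mem measurableSet_Ioi] with u hu
    simpa [f, div_eq_mul_one_div (malmstenKernel s u)] using
      (hasSum_exp_neg_succ_mul hu).mul_left (malmstenKernel s u)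
  have hweierstrass := hasSum_div_sub_log_one_add_div hs
  have hsummable : Summable fun n => ∫ u in Ioi 0, ‖f n u‖ := by
    simpa only [hf_integral_norm, hf_integral] using hweierstrass.summable
  refine ⟨integrable_of_hasSum_of_summable_integral_norm hf_int hsummable hf_sum, ?_⟩
  have h := hasSum_integral_of_summable_integral_norm hf_int hsummable
  rw [integral_congr_ae (hf_sum.mono fun u hu => hu.tsum_eq)] at h
  simp only [hf_integral] at h
  exact h.unique hweierstrass

theorem malmsten_formula_comp_mul {s c : ℝ} (hs : 0 < s) (hc : 0 < c) :
    IntegrableOn (fun u => malmstenKernel s (c * u) / (exp (c * u) - 1)) (Ioi 0) ∧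
      ∫ u in Ioi 0, malmstenKernel s (c * u) / (exp (c * u) - 1) =
        c⁻¹ * (eulerMascheroniConstant * s + log (Gamma (1 + s))) := by
  obtain ⟨hint, hval⟩ := malmsten_formula hs
  refine ⟨(integrableOn_Ioi_comp_mul_left_iff (fun u => malmstenKernel s u / (exp u - 1)) 0 hc).2
    (by simpa using hint), ?_⟩
  rw [integral_comp_mul_left_Ioi (fun u => malmstenKernel s u / (exp u - 1)) 0 hc, mul_zero, hval,
    smul_eq_mul]

lemma eqOn_gamma_ratio_integrand_comp_neg {s t : ℝ} (ht : 0 < t) :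
    EqOn (fun u => (exp (s * -u) - 1 - s * -u) *
        (t / (exp |-u| - 1) - 1 / (exp (|-u| / t) - 1)) / |-u|)
      (fun u => t * (malmstenKernel s u / (exp u - 1)) -
        t⁻¹ * (malmstenKernel (s * t) (t⁻¹ * u) / (exp (t⁻¹ * u) - 1))) (Ioi 0) := by
  intro u (hu : 0 < u)
  have h1 : exp u - 1 ≠ 0 := by linarith [add_one_lt_exp hu.ne']
  have h2 : exp (t⁻¹ * u) - 1 ≠ 0 := by
    linarith [add_one_lt_exp (by positivity : t⁻¹ * u ≠ 0), (by positivity : 0 < t⁻¹ * u)]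
  simp only [malmstenKernel, abs_neg, abs_of_pos hu, div_eq_inv_mul _ t]
  field_simp
  ring_nf

/-- For s, t > 0: Γ(1+s)^t/Γ(1+st) equals the exponential of
∫_{-∞}^0 (e^{sx}-1-sx)(t/(e^{|x|}-1) - 1/(e^{|x|/t}-1)) dx/|x|,
the integral converging absolutely. -/
theorem gamma_power_ratio_formula (s t : ℝ) (hs : 0 < s) (ht : 0 < t) :
    IntegrableOn
      (fun x : ℝ => (Real.exp (s * x) - 1 - s * x) *
        (t / (Real.exp |x| - 1) - 1 / (Real.exp (|x| / t) - 1)) / |x|)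
      (Set.Iio (0:ℝ)) ∧
    Real.Gamma (1 + s) ^ t / Real.Gamma (1 + s * t) =
      Real.exp (∫ x in Set.Iio (0:ℝ),
        (Real.exp (s * x) - 1 - s * x) *
          (t / (Real.exp |x| - 1) - 1 / (Real.exp (|x| / t) - 1)) / |x|) := by
  obtain ⟨hint_s, hval_s⟩ := malmsten_formula hs
  obtain ⟨hint_st, hval_st⟩ := malmsten_formula_comp_mul (mul_pos hs ht) (inv_pos.2 ht)
  have hint := (hint_s.const_mul t).sub (hint_st.const_mul t⁻¹)
  have hEq := eqOn_gamma_ratio_integrand_comp_neg (s := s) ht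
  constructor
  · rw [integrableOn_Iio_iff_comp_neg, neg_zero]
    exact IntegrableOn.congr_fun hint hEq.symm measurableSet_Ioi
  · rw [← integral_Iic_eq_integral_Iio, ← neg_neg (0 : ℝ), ← integral_comp_neg_Ioi,
      neg_zero, setIntegral_congr_fun measurableSet_Ioi hEq, integral_sub (hint_s.const_mul t)
      (hint_st.const_mul t⁻¹), integral_const_mul, integral_const_mul, hval_s, hval_st, inv_inv,
      inv_mul_cancel_left₀ ht.ne']
    have hΓ : 0 < Gamma (1 + s) := Gamma_pos_of_pos (by positivity)
    have hΓ' : 0 < Gamma (1 + s * t) := Gamma_pos_of_pos (by positivity)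
    rw [show t * (eulerMascheroniConstant * s + log (Gamma (1 + s))) -
        (eulerMascheroniConstant * (s * t) + log (Gamma (1 + s * t))) =
        log (Gamma (1 + s)) * t - log (Gamma (1 + s * t)) by ring,
      exp_sub, ← rpow_def_of_pos hΓ, exp_log hΓ']
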